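/- If M and N are Z3-matrices, both of grade 0, then tr_{Z3}(MN) = tr_{Z3}(NM). -/
import Mathlib


noncomputable section

/-- `j = e^{2πi/3}`, a primitive cube root of unity. -/
def jj : ℂ := Complex.exp (2 * Real.pi * Complex.I / 3)

namespace Z3

/-- Generators: `Sum.inl i` is the grade-1 generator `θ_i`,
`Sum.inr i` is the grade-2 generator `θ̄_i`. -/
abbrev Gen (N : ℕ) := Fin N ⊕ Fin N

/-- Grade of a generator. -/
def genGrade {N : ℕ} : Gen N → ZMod 3
  | Sum.inl _ => 1
  | Sum.inr _ => 2

/-- Grade of a word in the generators (sum of the grades mod 3). -/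
def wGrade {N : ℕ} (w : List (Gen N)) : ZMod 3 := (w.map genGrade).sum

/-- The product in the free algebra of the letters of a word. -/
def wProd {N : ℕ} (w : List (Gen N)) : FreeAlgebra ℂ (Gen N) :=
  (w.map (FreeAlgebra.ι ℂ)).prod

/-- Defining relations of the `ℤ₃`-graded Grassmann algebra: homogeneous
grade-0 elements are central, and `A Ā = j Ā A` for `A` of grade 1 and `Ā` of
grade 2. -/
inductive Rel (N : ℕ) : FreeAlgebra ℂ (Gen N) → FreeAlgebra ℂ (Gen N) → Prop
  | central (w₁ w₂ : List (Gen N)) (h : wGrade w₁ = 0) :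
      Rel N (wProd w₁ * wProd w₂) (wProd w₂ * wProd w₁)
  | comm12 (w₁ w₂ : List (Gen N)) (h₁ : wGrade w₁ = 1) (h₂ : wGrade w₂ = 2) :
      Rel N (wProd w₁ * wProd w₂) (jj • (wProd w₂ * wProd w₁))

/-- The `ℤ₃`-graded Grassmann algebra on `N` grade-1 generators `θ_i` and `N`
grade-2 generators `θ̄_i`. -/
abbrev G (N : ℕ) := RingQuot (Rel N)

/-- The canonical quotient map. -/
def mk (N : ℕ) : FreeAlgebra ℂ (Gen N) →ₐ[ℂ] G N := RingQuot.mkAlgHom ℂ (Rel N)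

/-- The homogeneous component of grade `g`: the span of (classes of) words of
grade `g`. -/
def 𝒢 {N : ℕ} (g : ZMod 3) : Submodule ℂ (G N) :=
  Submodule.span ℂ {x | ∃ w : List (Gen N), wGrade w = g ∧ x = mk N (wProd w)}

/-- The "body" map on the free algebra, sending every generator to `0`. -/
def bodyF (N : ℕ) : FreeAlgebra ℂ (Gen N) →ₐ[ℂ] ℂ :=
  FreeAlgebra.lift ℂ (fun _ : Gen N => (0 : ℂ))

lemma bodyF_wProd_ne_nil {N : ℕ} (w : List (Gen N)) (hw : w ≠ []) :
    bodyF N (wProd w) = 0 := by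
  cases w with
  | nil => exact absurd rfl hw
  | cons a t =>
      simp only [wProd, List.map_cons, List.prod_cons, map_mul, bodyF,
        FreeAlgebra.lift_ι_apply, zero_mul]

lemma wGrade_ne_nil {N : ℕ} {w : List (Gen N)} {g : ZMod 3} (h : wGrade w = g)
    (hg : g ≠ 0) : w ≠ [] := by
  intro e; subst e; simp [wGrade] at h; exact hg h.symm

/-- The body (augmentation) map of the Grassmann algebra: coefficient of the
unit `I`. -/
def bodyA (N : ℕ) : G N →ₐ[ℂ] ℂ :=
  RingQuot.liftAlgHom ℂ ⟨bodyF N, by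
    intro x y h
    cases h with
    | central w₁ w₂ h => simp only [map_mul]; ring
    | comm12 w₁ w₂ h₁ h₂ =>
        have h1 : bodyF N (wProd w₁) = 0 :=
          bodyF_wProd_ne_nil w₁ (wGrade_ne_nil h₁ (by decide))
        simp [map_mul, map_smul, h1]⟩

end Z3

namespace Z3

/-- Index type for `3×3` block matrices with block sizes `n 0, n 1, n 2`. -/
abbrev Idx (n : Fin 3 → ℕ) := Σ r : Fin 3, Fin (n r)

/-- A `ℤ₃`-matrix: a `3×3` block matrix with Grassmann entries. -/
abbrev ZMat (N : ℕ) (n : Fin 3 → ℕ) := Matrix (Idx n) (Idx n) (G N)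

/-- A `ℤ₃`-matrix is homogeneous of grade `g` when the entry in block
position `(r,s)` has Grassmann grade `g + r - s (mod 3)` (equivalently, the
grade of the matrix is the sum mod 3 of the block-position grade `s - r` and
the Grassmann grade of the entries of that block). -/
def MGrade {N : ℕ} {n : Fin 3 → ℕ} (g : ZMod 3) (M : ZMat N n) : Prop :=
  ∀ p q : Idx n, M p q ∈ 𝒢 (g + (p.1.val : ZMod 3) - (q.1.val : ZMod 3))

/-- Weights of the three diagonal blocks appearing in the `ℤ₃`-trace and in
scalar multiplication: `(1, j^2, j)` raised to suitable powers. -/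
def wt : Fin 3 → ZMod 3 := ![0, 2, 1]

/-- The `ℤ₃`-trace of a `ℤ₃`-matrix of grade `g` with diagonal blocks
`A, E, I` is `tr A + j^{2(1-g)} tr E + j^{(1-g)} tr I`. -/
def ztrace {N : ℕ} {n : Fin 3 → ℕ} (g : ZMod 3) (M : ZMat N n) : G N :=
  ∑ p : Idx n, (jj ^ ((wt p.1 * (1 - g)).val)) • M p p

/-- The diagonal `ℤ₃`-matrix `diag(λ, j^{2∂λ} λ, j^{∂λ} λ)` implementing the
scalar multiplication by a homogeneous Grassmann element `λ` of grade `d`. -/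
def lamMat (N : ℕ) (n : Fin 3 → ℕ) (lam : G N) (d : ZMod 3) : ZMat N n :=
  Matrix.diagonal fun p => (jj ^ ((wt p.1 * d).val)) • lam

/-- Left product of a `ℤ₃`-matrix by a homogeneous Grassmann element of
grade `d`. -/
def smulL {N : ℕ} {n : Fin 3 → ℕ} (lam : G N) (d : ZMod 3) (M : ZMat N n) : ZMat N n :=
  lamMat N n lam d * M

/-- Right product of a `ℤ₃`-matrix by a homogeneous Grassmann element of
grade `d`. -/
def smulR {N : ℕ} {n : Fin 3 → ℕ} (M : ZMat N n) (lam : G N) (d : ZMod 3) : ZMat N n :=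
  M * lamMat N n lam d

end Z3


lemma jj_cube : jj ^ 3 = 1 := by
  have : jj ^ 3 = Complex.exp ((3 : ℕ) * (2 * Real.pi * Complex.I / 3)) := by
    rw [jj, Complex.exp_nat_mul]
  rw [this, show ((3 : ℕ) : ℂ) * (2 * Real.pi * Complex.I / 3)
      = 2 * Real.pi * Complex.I by push_cast; ring, Complex.exp_two_pi_mul_I]

lemma jj_pow_mod (m : ℕ) : jj ^ m = jj ^ (m % 3) := by
  conv_lhs => rw [← Nat.div_add_mod m 3]
  rw [pow_add, pow_mul, jj_cube, one_pow, one_mul]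

namespace Z3

lemma zmod3_cases' : ∀ a : ZMod 3, a = 0 ∨ a = 1 ∨ a = 2 := by decide
lemma zmod3_cases (a : ZMod 3) : a = 0 ∨ a = 1 ∨ a = 2 := zmod3_cases' a

lemma key_words {N : ℕ} (a : ZMod 3) (w₁ w₂ : List (Gen N))
    (hw₁ : wGrade w₁ = a) (hw₂ : wGrade w₂ = -a) :
    mk N (wProd w₁) * mk N (wProd w₂)
      = jj ^ a.val • (mk N (wProd w₂) * mk N (wProd w₁)) := by
  rcases zmod3_cases a with rfl | rfl | rfl
  · have h := RingQuot.mkAlgHom_rel ℂ (Rel.central w₁ w₂ hw₁)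
    simp only [map_mul] at h
    simpa [mk] using h
  · have h := RingQuot.mkAlgHom_rel ℂ
      (Rel.comm12 w₁ w₂ hw₁ (by rw [hw₂]; decide))
    simp only [map_mul, map_smul] at h
    have hv : ((1 : ZMod 3)).val = 1 := rfl
    rw [hv, pow_one]
    simpa [mk] using h
  · have h := RingQuot.mkAlgHom_rel ℂ
      (Rel.comm12 w₂ w₁ (by rw [hw₂]; decide) hw₁)
    simp only [map_mul, map_smul] at h
    have h' : mk N (wProd w₂) * mk N (wProd w₁)
        = jj • (mk N (wProd w₁) * mk N (wProd w₂)) := by simpa [mk] using h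
    rw [h', smul_smul]
    have : (2 : ZMod 3).val = 2 := by decide
    rw [this]
    have : jj ^ 2 * jj = 1 := by rw [← pow_succ, jj_cube]
    rw [this, one_smul]

lemma key {N : ℕ} (a : ZMod 3) {x y : G N} (hx : x ∈ 𝒢 a) (hy : y ∈ 𝒢 (-a)) :
    x * y = jj ^ a.val • (y * x) := by
  induction hx using Submodule.span_induction with
  | mem x hxm =>
    obtain ⟨w₁, hw₁, rfl⟩ := hxm
    induction hy using Submodule.span_induction with
    | mem y hym =>
      obtain ⟨w₂, hw₂, rfl⟩ := hym
      exact key_words a w₁ w₂ hw₁ hw₂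
    | zero => simp
    | add y z _ _ hy hz => simp only [mul_add, add_mul, smul_add, hy, hz]
    | smul r y _ hy =>
      simp only [mul_smul_comm, smul_mul_assoc, hy, smul_smul, mul_comm]
  | zero => simp
  | add x z _ _ hx hz => simp only [mul_add, add_mul, smul_add, hx, hz]
  | smul r x _ hx =>
    simp only [mul_smul_comm, smul_mul_assoc, hx, smul_smul, mul_comm]

lemma wt_compat : ∀ r s : Fin 3,
    ((wt r).val + ((r.val : ZMod 3) - (s.val : ZMod 3)).val) % 3
      = (wt s).val % 3 := by decide

end Z3

/-- if `M` and `N` are `ℤ₃`-matrices, both of grade 0, then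
`tr_{ℤ₃}(MN) = tr_{ℤ₃}(NM)`. -/
theorem ztrace_mul_grade_zero (N : ℕ) (n : Fin 3 → ℕ)
    (M P : Z3.ZMat N n) (hM : Z3.MGrade 0 M) (hP : Z3.MGrade 0 P) :
    Z3.ztrace 0 (M * P) = Z3.ztrace 0 (P * M) := by
  classical
  simp only [Z3.ztrace, Matrix.mul_apply, Finset.smul_sum]
  rw [Finset.sum_sigma', Finset.sum_sigma']
  rw [show (∑ x ∈ (Finset.univ : Finset (Z3.Idx n)).sigma fun p => (Finset.univ : Finset (Z3.Idx n)),
      jj ^ ((Z3.wt x.1.1 * (1 - 0)).val) • (P x.1 x.2 * M x.2 x.1)) =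
      ∑ x ∈ (Finset.univ : Finset (Z3.Idx n)).sigma fun p => (Finset.univ : Finset (Z3.Idx n)),
      jj ^ ((Z3.wt x.2.1 * (1 - 0)).val) • (P x.2 x.1 * M x.1 x.2) from
    Finset.sum_nbij' (fun x => ⟨x.2, x.1⟩) (fun x => ⟨x.2, x.1⟩)
      (by simp) (by simp) (by simp) (by simp) (fun x _ => rfl)]
  refine Finset.sum_congr rfl fun x _ => ?_
  obtain ⟨p, q⟩ := x
  have hm : M p q ∈ Z3.𝒢 ((p.1.val : ZMod 3) - (q.1.val : ZMod 3)) := by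
    have := hM p q; simpa using this
  have hp : P q p ∈ Z3.𝒢 (-((p.1.val : ZMod 3) - (q.1.val : ZMod 3))) := by
    have := hP q p; simpa [neg_sub] using this
  have hk := Z3.key _ hm hp
  simp only [] at *
  rw [hk, smul_smul, ← pow_add]
  have hwt := Z3.wt_compat p.1 q.1
  have h1 : (1 - (0 : ZMod 3)) = 1 := by decide
  rw [h1, mul_one, mul_one, jj_pow_mod, hwt, ← jj_pow_mod]
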